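/- arXiv:2308.09011 — 2 statements merged into one kernel-verified Lean document; each statement's English description precedes it below -/
import Mathlib

section
/- Let D be an SPBIBD with parameters (v,b,r,k,λ₁,0) of type (k−1,t) where 0 < t < k and r < b. Then in the incidence graph Γ of D, every point p ∈ P has eccentricity exactly 4. -/
open Finset

/-- The set of blocks incident with a point `p`. -/
def blocksThru {P Bl : Type} [Fintype Bl] [DecidableEq P] (pts : Bl → Finset P)
    (p : P) : Finset Bl :=
  Finset.univ.filter (fun C => p ∈ pts C)

/-- The number of blocks containing both points `p` and `q`. -/
def lamCount {P Bl : Type} [Fintype Bl] [DecidableEq P] [DecidableEq Bl]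
    (pts : Bl → Finset P) (p q : P) : ℕ :=
  ((blocksThru pts p) ∩ (blocksThru pts q)).card

/-- The incidence graph of an incidence structure: points and blocks as the two
color classes, with a point adjacent to a block iff it lies in the block. -/
def incGraph {P Bl : Type} (pts : Bl → Finset P) : SimpleGraph (P ⊕ Bl) :=
  SimpleGraph.fromRel (fun u w =>
    ∃ (p : P) (C : Bl), u = Sum.inl p ∧ w = Sum.inr C ∧ p ∈ pts C)

lemma mem_blocksThru {P Bl : Type} [Fintype Bl] [DecidableEq P] (pts : Bl → Finset P)
    {p : P} {C : Bl} : C ∈ blocksThru pts p ↔ p ∈ pts C := by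
  simp [blocksThru]

lemma incGraph_adj_iff {P Bl : Type} (pts : Bl → Finset P) {u w : P ⊕ Bl} :
    (incGraph pts).Adj u w ↔
      ((∃ p C, u = Sum.inl p ∧ w = Sum.inr C ∧ p ∈ pts C) ∨
       (∃ p C, w = Sum.inl p ∧ u = Sum.inr C ∧ p ∈ pts C)) := by
  unfold incGraph
  rw [SimpleGraph.fromRel_adj]
  constructor
  · rintro ⟨-, h⟩; exact h
  · rintro h
    refine ⟨?_, h⟩
    rcases h with ⟨p, C, rfl, rfl, -⟩ | ⟨p, C, rfl, rfl, -⟩ <;> simp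

lemma incGraph_adj_inl_inr {P Bl : Type} (pts : Bl → Finset P) {p : P} {C : Bl} :
    (incGraph pts).Adj (Sum.inl p) (Sum.inr C) ↔ p ∈ pts C := by
  rw [incGraph_adj_iff]
  constructor
  · rintro (⟨p', C', hp, hC, hm⟩ | ⟨p', C', hp, hC, hm⟩)
    · cases hp; cases hC; exact hm
    · exact absurd hp (by simp)
  · intro h; exact Or.inl ⟨p, C, rfl, rfl, h⟩

lemma incGraph_adj_side {P Bl : Type} (pts : Bl → Finset P) {u w : P ⊕ Bl}
    (h : (incGraph pts).Adj u w) : u.isLeft = !w.isLeft := by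
  rcases (incGraph_adj_iff pts).mp h with ⟨p, C, rfl, rfl, -⟩ | ⟨p, C, rfl, rfl, -⟩ <;> rfl

lemma incGraph_walk_parity {P Bl : Type} (pts : Bl → Finset P) {u v : P ⊕ Bl}
    (w : (incGraph pts).Walk u v) : Even w.length ↔ u.isLeft = v.isLeft := by
  induction w with
  | nil => simp
  | @cons a x c h w ih =>
    have hs := incGraph_adj_side pts h
    rw [SimpleGraph.Walk.length_cons, Nat.even_add_one, ih, hs]
    cases hx : x.isLeft <;> cases hc : c.isLeft <;> simp

/-- in the incidence graph of an SPBIBD with parameters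
(v,b,r,k,λ₁,0) of type (k−1,t), 0 < t < k, r < b, every point has
eccentricity exactly 4. -/
theorem stmt3
    {P Bl : Type} [Fintype P] [Fintype Bl] [DecidableEq P] [DecidableEq Bl]
    (pts : Bl → Finset P) (v b r k t lam y : ℕ)
    (hv : Fintype.card P = v) (hb : Fintype.card Bl = b)
    (hk : ∀ C : Bl, (pts C).card = k)
    (hr : ∀ p : P, (blocksThru pts p).card = r)
    (hlam : ∀ p q : P, p ≠ q → lamCount pts p q = lam ∨ lamCount pts p q = 0)
    (hflag : ∀ (p : P) (C : Bl), p ∈ pts C →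
      ((pts C).filter (fun q => q ≠ p ∧ lamCount pts p q = lam)).card = k - 1)
    (hnonflag : ∀ (p : P) (C : Bl), p ∉ pts C →
      ((pts C).filter (fun q => lamCount pts p q = lam)).card = t)
    (hkv : k < v) (hrb : r < b) (ht : 1 ≤ t) (htk : t < k) (hlam1 : 1 ≤ lam)
    : ∀ p : P,
      (∀ w : P ⊕ Bl, (incGraph pts).Reachable (Sum.inl p) w) ∧
      (∀ w : P ⊕ Bl, (incGraph pts).dist (Sum.inl p) w ≤ 4) ∧
      (∃ w : P ⊕ Bl, (incGraph pts).dist (Sum.inl p) w = 4) := by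
  intro p
  -- r ≥ 1
  have hb1 : 0 < Fintype.card Bl := by omega
  obtain ⟨C0⟩ := Fintype.card_pos_iff.mp hb1
  have hk2 : 2 ≤ k := by omega
  have hr1 : 1 ≤ r := by
    obtain ⟨p0, hp0⟩ : (pts C0).Nonempty := by
      rw [← Finset.card_pos, hk C0]; omega
    rw [← hr p0]
    exact Finset.card_pos.mpr ⟨C0, (mem_blocksThru pts).mpr hp0⟩
  -- common block gives a 2-walk
  have hcommon : ∀ q : P, lamCount pts p q = lam →
      ∃ B : Bl, p ∈ pts B ∧ q ∈ pts B := by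
    intro q hq
    have : (blocksThru pts p ∩ blocksThru pts q).Nonempty := by
      rw [← Finset.card_pos]; unfold lamCount at hq; omega
    obtain ⟨B, hB⟩ := this
    rw [Finset.mem_inter, mem_blocksThru, mem_blocksThru] at hB
    exact ⟨B, hB⟩
  -- walk to each block of length ≤ 3
  have hblockwalk : ∀ C : Bl, ∃ w : (incGraph pts).Walk (Sum.inl p) (Sum.inr C),
      w.length ≤ 3 := by
    intro C
    by_cases hpC : p ∈ pts C
    · exact ⟨SimpleGraph.Walk.cons ((incGraph_adj_inl_inr pts).mpr hpC)
        SimpleGraph.Walk.nil, by simp⟩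
    · obtain ⟨q, hq⟩ : ((pts C).filter (fun q => lamCount pts p q = lam)).Nonempty := by
        rw [← Finset.card_pos, hnonflag p C hpC]; omega
      rw [Finset.mem_filter] at hq
      obtain ⟨B, hpB, hqB⟩ := hcommon q hq.2
      refine ⟨SimpleGraph.Walk.cons ((incGraph_adj_inl_inr pts).mpr hpB)
        (SimpleGraph.Walk.cons ((incGraph_adj_inl_inr pts).mpr hqB).symm
          (SimpleGraph.Walk.cons ((incGraph_adj_inl_inr pts).mpr hq.1) SimpleGraph.Walk.nil)), by simp⟩
  -- walk to each point of length ≤ 4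
  have hpointwalk : ∀ q : P, ∃ w : (incGraph pts).Walk (Sum.inl p) (Sum.inl q),
      w.length ≤ 4 := by
    intro q
    by_cases hqp : q = p
    · subst hqp; exact ⟨SimpleGraph.Walk.nil, by simp⟩
    · obtain ⟨C, hC⟩ : (blocksThru pts q).Nonempty := by
        rw [← Finset.card_pos, hr q]; omega
      rw [mem_blocksThru] at hC
      obtain ⟨w, hw⟩ := hblockwalk C
      exact ⟨w.concat ((incGraph_adj_inl_inr pts).mpr hC).symm, by
        rw [SimpleGraph.Walk.length_concat]; omega⟩
  have hreach : ∀ w : P ⊕ Bl, (incGraph pts).Reachable (Sum.inl p) w := by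
    rintro (q | C)
    · exact ⟨(hpointwalk q).choose⟩
    · exact ⟨(hblockwalk C).choose⟩
  have hdist : ∀ w : P ⊕ Bl, (incGraph pts).dist (Sum.inl p) w ≤ 4 := by
    rintro (q | C)
    · obtain ⟨w, hw⟩ := hpointwalk q
      exact le_trans (SimpleGraph.dist_le w) hw
    · obtain ⟨w, hw⟩ := hblockwalk C
      exact le_trans (SimpleGraph.dist_le w) (by omega)
  refine ⟨hreach, hdist, ?_⟩
  -- find a block not through p
  obtain ⟨C1, hC1⟩ : ∃ C : Bl, p ∉ pts C := by
    by_contra h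
    push_neg at h
    have : blocksThru pts p = Finset.univ :=
      Finset.eq_univ_iff_forall.mpr fun C => (mem_blocksThru pts).mpr (h C)
    rw [← hr p, this, Finset.card_univ, hb] at hrb
    omega
  -- find q in C1 with lamCount p q = 0
  obtain ⟨q, hqC1, hqlam⟩ : ∃ q ∈ pts C1, lamCount pts p q ≠ lam := by
    by_contra h
    push_neg at h
    have : (pts C1).filter (fun q => lamCount pts p q = lam) = pts C1 :=
      Finset.filter_true_of_mem h
    have h2 := congrArg Finset.card this
    rw [hnonflag p C1 hC1, hk C1] at h2
    omega
  have hqp : q ≠ p := fun h => hC1 (h ▸ hqC1)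
  have hq0 : lamCount pts p q = 0 := by
    rcases hlam p q (Ne.symm hqp) with h | h
    · exact absurd h hqlam
    · exact h
  refine ⟨Sum.inl q, ?_⟩
  have hR : (incGraph pts).Reachable (Sum.inl p) (Sum.inl q) := hreach _
  obtain ⟨w, hw⟩ := hR.exists_walk_length_eq_dist
  have heven : Even ((incGraph pts).dist (Sum.inl p) (Sum.inl q)) := by
    rw [← hw, incGraph_walk_parity]
    rfl
  have hne0 : (incGraph pts).dist (Sum.inl p) (Sum.inl q) ≠ 0 := by
    rw [Ne, hR.dist_eq_zero_iff]
    exact fun h => hqp (Sum.inl.inj h).symm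
  have hne2 : (incGraph pts).dist (Sum.inl p) (Sum.inl q) ≠ 2 := by
    intro h2
    rw [h2] at hw
    -- destructure a walk of length 2
    cases w with
    | nil => simp at hw
    | cons h1 w' =>
      cases w' with
      | nil => simp at hw
      | @cons x c _ h2' w'' =>
        cases w'' with
        | nil =>
          rcases (incGraph_adj_iff pts).mp h1 with ⟨p', C, hp', hx, hm⟩ | ⟨p', C, hp', hx, hm⟩
          · cases hx
            cases hp'
            have hqm : q ∈ pts C := by
              rcases (incGraph_adj_iff pts).mp h2' with ⟨p'', C', h1', h2'', hm'⟩ | ⟨p'', C', h1', h2'', hm'⟩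
              · exact absurd h1' (by simp)
              · cases h2''
                cases h1'
                exact hm'
            have : C ∈ blocksThru pts p ∩ blocksThru pts q := by
              rw [Finset.mem_inter, mem_blocksThru, mem_blocksThru]
              exact ⟨hm, hqm⟩
            have : 0 < lamCount pts p q := Finset.card_pos.mpr ⟨C, this⟩
            omega
          · exact absurd hx (by simp)
        | cons _ _ =>
          simp only [SimpleGraph.Walk.length_cons] at hw
          omega
  have hle := hdist (Sum.inl q)
  rw [Nat.even_iff] at heven
  omega
end

section
/- Let D be a quasi-symmetric SPBIBD with parameters (v,b,r,k,λ₁,0) of type (k−1,t) with intersection numbers x=0 and y>0, and let Γ be its incidence graph. Then every block B ∈ B is distance-regularized with intersection numbers c'₀=0, c'₁=1, c'₂=y, c'₃=tλ₁/y, c'₄=k and b'₀=k, b'₁=r−1, b'₂=k−y, b'₃=r−tλ₁/y, b'₄=0. In particular y divides tλ₁. -/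
open Finset

/-- The set of neighbours of `z` lying at distance `j` from `x`. -/
def nbrAt {V : Type} (G : SimpleGraph V) (x z : V) (j : ℕ) : Set V :=
  {w | G.Adj z w ∧ G.dist x w = j}

section Helpers

variable {P Bl : Type} (pts : Bl → Finset P)

lemma adj_inl_inr {p : P} {C : Bl} : (incGraph pts).Adj (Sum.inl p) (Sum.inr C) ↔ p ∈ pts C := by
  simp [incGraph, SimpleGraph.fromRel_adj]

lemma adj_inr_inl {p : P} {C : Bl} : (incGraph pts).Adj (Sum.inr C) (Sum.inl p) ↔ p ∈ pts C := by
  simp [incGraph, SimpleGraph.fromRel_adj]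

lemma not_adj_inl_inl {p q : P} : ¬ (incGraph pts).Adj (Sum.inl p) (Sum.inl q) := by
  simp [incGraph, SimpleGraph.fromRel_adj]

lemma not_adj_inr_inr {C C' : Bl} : ¬ (incGraph pts).Adj (Sum.inr C) (Sum.inr C') := by
  simp [incGraph, SimpleGraph.fromRel_adj]

lemma walk_even {u w : P ⊕ Bl} (W : (incGraph pts).Walk u w) :
    Even W.length ↔ u.isLeft = w.isLeft := by
  induction W with
  | nil => simp
  | cons h W ih =>
    rename_i a m c
    have hc : a.isLeft = !m.isLeft := by
      rcases a with p | C <;> rcases m with q | C'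
      · exact absurd h (not_adj_inl_inl pts)
      · simp
      · simp
      · exact absurd h (not_adj_inr_inr pts)
    rw [SimpleGraph.Walk.length_cons, Nat.even_add_one, ih, hc]
    cases m.isLeft <;> cases c.isLeft <;> simp

/-- distance from a block to an incident point is 1 -/
lemma dist1 {p : P} {C : Bl} (h : p ∈ pts C) :
    (incGraph pts).dist (Sum.inr C) (Sum.inl p) = 1 :=
  SimpleGraph.dist_eq_one_iff_adj.mpr ((adj_inr_inl pts).mpr h)

/-- distance between distinct meeting blocks is 2 -/
lemma dist2 {C C' : Bl} (hne : C ≠ C') {q : P} (hq : q ∈ pts C) (hq' : q ∈ pts C') :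
    (incGraph pts).dist (Sum.inr C) (Sum.inr C') = 2 := by
  have W : (incGraph pts).Walk (Sum.inr C) (Sum.inr C') :=
    .cons ((adj_inr_inl pts).mpr hq) (.cons ((adj_inl_inr pts).mpr hq') .nil)
  have hle : (incGraph pts).dist (Sum.inr C) (Sum.inr C') ≤ 2 :=
    SimpleGraph.dist_le (.cons ((adj_inr_inl pts).mpr hq) (.cons ((adj_inl_inr pts).mpr hq') .nil))
  have hpos : 0 < (incGraph pts).dist (Sum.inr C) (Sum.inr C') :=
    SimpleGraph.Reachable.pos_dist_of_ne ⟨W⟩ (by simp [hne])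
  have hne1 : (incGraph pts).dist (Sum.inr C) (Sum.inr C') ≠ 1 := by
    intro h1
    exact not_adj_inr_inr pts (SimpleGraph.dist_eq_one_iff_adj.mp h1)
  omega

end Helpers

section Helpers2

variable {P Bl : Type} [Fintype P] [Fintype Bl] [DecidableEq P] [DecidableEq Bl]
  (pts : Bl → Finset P) {t lam y : ℕ}

omit [Fintype P] in
lemma dist3
    (hnf : ∀ (p : P) (C : Bl), p ∉ pts C →
      ((pts C).filter (fun q => lamCount pts p q = lam)).card = t)
    (ht : 1 ≤ t) (hlam1 : 1 ≤ lam)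
    {p : P} {C : Bl} (hp : p ∉ pts C) :
    (incGraph pts).dist (Sum.inr C) (Sum.inl p) = 3 := by
  have hcard := hnf p C hp
  have hne : ((pts C).filter (fun q => lamCount pts p q = lam)).Nonempty := by
    rw [← Finset.card_pos, hcard]; omega
  obtain ⟨q, hq⟩ := hne
  rw [Finset.mem_filter] at hq
  obtain ⟨hqC, hql⟩ := hq
  have hlc : 0 < lamCount pts p q := by omega
  rw [lamCount, Finset.card_pos] at hlc
  obtain ⟨C'', hC''⟩ := hlc
  rw [Finset.mem_inter, blocksThru, blocksThru, Finset.mem_filter, Finset.mem_filter] at hC''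
  obtain ⟨⟨-, hpC''⟩, -, hqC''⟩ := hC''
  have W : (incGraph pts).Walk (Sum.inr C) (Sum.inl p) :=
    .cons ((adj_inr_inl pts).mpr hqC) (.cons ((adj_inl_inr pts).mpr hqC'')
      (.cons ((adj_inr_inl pts).mpr hpC'') .nil))
  have hle : (incGraph pts).dist (Sum.inr C) (Sum.inl p) ≤ 3 :=
    SimpleGraph.dist_le (.cons ((adj_inr_inl pts).mpr hqC) (.cons ((adj_inl_inr pts).mpr hqC'')
      (.cons ((adj_inr_inl pts).mpr hpC'') .nil)))
  obtain ⟨W', hW'⟩ := SimpleGraph.Reachable.exists_walk_length_eq_dist ⟨W⟩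
  have hodd : ¬ Even ((incGraph pts).dist (Sum.inr C) (Sum.inl p)) := by
    rw [← hW', walk_even]; simp
  have hne1 : (incGraph pts).dist (Sum.inr C) (Sum.inl p) ≠ 1 := by
    intro h1
    exact hp ((adj_inr_inl pts).mp (SimpleGraph.dist_eq_one_iff_adj.mp h1))
  rw [Nat.not_even_iff] at hodd
  omega

omit [Fintype P] in
lemma dist4
    (hnf : ∀ (p : P) (C : Bl), p ∉ pts C →
      ((pts C).filter (fun q => lamCount pts p q = lam)).card = t)
    (ht : 1 ≤ t) (hlam1 : 1 ≤ lam)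
    (hkpos : ∀ C : Bl, (pts C).Nonempty) {C C' : Bl} (hne : C ≠ C')
    (hdisj : pts C ∩ pts C' = ∅) :
    (incGraph pts).dist (Sum.inr C) (Sum.inr C') = 4 := by
  obtain ⟨p, hp'⟩ := hkpos C'
  have hp : p ∉ pts C := by
    intro h
    exact absurd (Finset.mem_inter.mpr ⟨h, hp'⟩) (by simp [hdisj])
  have d3 := dist3 pts hnf ht hlam1 hp
  have hreach : (incGraph pts).Reachable (Sum.inr C) (Sum.inl p) :=
    SimpleGraph.Reachable.of_dist_ne_zero (by omega)
  obtain ⟨W, hW⟩ := hreach.exists_walk_length_eq_dist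
  have hle : (incGraph pts).dist (Sum.inr C) (Sum.inr C') ≤ 4 := by
    have h := SimpleGraph.dist_le (W.concat ((adj_inl_inr pts).mpr hp'))
    rw [SimpleGraph.Walk.length_concat, hW, d3] at h
    exact h
  have hreach2 : (incGraph pts).Reachable (Sum.inr C) (Sum.inr C') :=
    ⟨W.concat ((adj_inl_inr pts).mpr hp')⟩
  have hpos : 0 < (incGraph pts).dist (Sum.inr C) (Sum.inr C') :=
    hreach2.pos_dist_of_ne (by simp [hne])
  obtain ⟨W', hW'⟩ := hreach2.exists_walk_length_eq_dist
  have heven : Even ((incGraph pts).dist (Sum.inr C) (Sum.inr C')) := by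
    rw [← hW', walk_even]; rfl
  have hne2 : (incGraph pts).dist (Sum.inr C) (Sum.inr C') ≠ 2 := by
    intro h2
    obtain ⟨W2, hW2⟩ := hreach2.exists_walk_length_eq_dist
    rw [h2] at hW2
    cases W2 with
    | nil => simp at hW2
    | cons h W3 =>
      rename_i m
      rcases m with q | C''
      · have hqC : q ∈ pts C := (adj_inr_inl pts).mp h
        have hW3len : W3.length = 1 := by
          simp [SimpleGraph.Walk.length_cons] at hW2; omega
        have hle1 : (incGraph pts).dist (Sum.inl q) (Sum.inr C') ≤ 1 := by
          have := SimpleGraph.dist_le W3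
          omega
        have hd1 : (incGraph pts).dist (Sum.inl q) (Sum.inr C') = 1 := by
          have hpos' : 0 < (incGraph pts).dist (Sum.inl q) (Sum.inr C') :=
            SimpleGraph.Reachable.pos_dist_of_ne ⟨W3⟩ (by simp)
          omega
        have hqC' : q ∈ pts C' := (adj_inl_inr pts).mp (SimpleGraph.dist_eq_one_iff_adj.mp hd1)
        exact absurd (Finset.mem_inter.mpr ⟨hqC, hqC'⟩) (by simp [hdisj])
      · exact absurd h (not_adj_inr_inr pts)
  rw [Nat.even_iff] at heven
  omega

omit [Fintype P] in
lemma doubleCount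
    (hlam : ∀ p q : P, p ≠ q → lamCount pts p q = lam ∨ lamCount pts p q = 0)
    (hnf : ∀ (p : P) (C : Bl), p ∉ pts C →
      ((pts C).filter (fun q => lamCount pts p q = lam)).card = t)
    (hqs : ∀ C C' : Bl, C ≠ C' →
      (pts C ∩ pts C').card = 0 ∨ (pts C ∩ pts C').card = y)
    {p : P} {C : Bl} (hp : p ∉ pts C) :
    y * ((blocksThru pts p).filter (fun C'' => (pts C ∩ pts C'').Nonempty)).card = t * lam := by
  have key : ∑ C'' ∈ blocksThru pts p, (pts C ∩ pts C'').card
      = ∑ q ∈ pts C, lamCount pts p q := by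
    have h1 : ∀ C'' : Bl, (pts C ∩ pts C'').card = ∑ q ∈ pts C, if q ∈ pts C'' then 1 else 0 := by
      intro C''
      rw [← Finset.card_filter]
      congr 1
    rw [Finset.sum_congr rfl (fun C'' _ => h1 C''), Finset.sum_comm]
    refine Finset.sum_congr rfl (fun q _ => ?_)
    rw [← Finset.card_filter, lamCount]
    congr 1
    ext C''
    simp [blocksThru, Finset.mem_filter, Finset.mem_inter]
  have lhs : ∑ C'' ∈ blocksThru pts p, (pts C ∩ pts C'').card
      = y * ((blocksThru pts p).filter (fun C'' => (pts C ∩ pts C'').Nonempty)).card := by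
    rw [← Finset.sum_filter_add_sum_filter_not (blocksThru pts p)
      (fun C'' => (pts C ∩ pts C'').Nonempty)]
    have h2 : ∑ C'' ∈ (blocksThru pts p).filter
        (fun C'' => ¬(pts C ∩ pts C'').Nonempty), (pts C ∩ pts C'').card = 0 := by
      refine Finset.sum_eq_zero (fun C'' hC'' => ?_)
      rw [Finset.mem_filter] at hC''
      rw [Finset.card_eq_zero, ← Finset.not_nonempty_iff_eq_empty]
      exact hC''.2
    rw [h2, add_zero]
    rw [Finset.sum_congr rfl (fun C'' hC'' => ?_), Finset.sum_const, smul_eq_mul, mul_comm]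
    rw [Finset.mem_filter] at hC''
    have hCne : C ≠ C'' := by
      rintro rfl
      exact hp (by simpa [blocksThru] using hC''.1)
    rcases hqs C C'' hCne with h | h
    · exact absurd (Finset.card_eq_zero.mp h) (Finset.nonempty_iff_ne_empty.mp hC''.2)
    · exact h
  have rhs : ∑ q ∈ pts C, lamCount pts p q = t * lam := by
    rw [← Finset.sum_filter_add_sum_filter_not (pts C) (fun q => lamCount pts p q = lam)]
    have h3 : ∑ q ∈ (pts C).filter (fun q => ¬lamCount pts p q = lam), lamCount pts p q = 0 := by
      refine Finset.sum_eq_zero (fun q hq => ?_)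
      rw [Finset.mem_filter] at hq
      have hpq : p ≠ q := by rintro rfl; exact hp hq.1
      rcases hlam p q hpq with h | h
      · exact absurd h hq.2
      · exact h
    rw [h3, add_zero]
    rw [Finset.sum_congr rfl (fun q hq => (Finset.mem_filter.mp hq).2), Finset.sum_const,
      smul_eq_mul, hnf p C hp]
  rw [lhs, rhs] at key
  exact key

lemma ncard_image_inl (S : Finset P) :
    (Sum.inl '' (S : Set P) : Set (P ⊕ Bl)).ncard = S.card := by
  rw [Set.ncard_image_of_injective _ Sum.inl_injective, Set.ncard_coe_finset]

lemma ncard_image_inr (S : Finset Bl) :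
    (Sum.inr '' (S : Set Bl) : Set (P ⊕ Bl)).ncard = S.card := by
  rw [Set.ncard_image_of_injective _ Sum.inr_injective, Set.ncard_coe_finset]

end Helpers2

/-- every block of the incidence graph is distance-regularized with
c'₀=0, c'₁=1, c'₂=y, c'₃=tλ₁/y, c'₄=k and b'₀=k, b'₁=r−1, b'₂=k−y,
b'₃=r−tλ₁/y, b'₄=0; in particular y ∣ tλ₁. -/
theorem stmt8
    {P Bl : Type} [Fintype P] [Fintype Bl] [DecidableEq P] [DecidableEq Bl]
    (pts : Bl → Finset P) (v b r k t lam y : ℕ)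
    (hv : Fintype.card P = v) (hb : Fintype.card Bl = b)
    (hk : ∀ C : Bl, (pts C).card = k)
    (hr : ∀ p : P, (blocksThru pts p).card = r)
    (hlam : ∀ p q : P, p ≠ q → lamCount pts p q = lam ∨ lamCount pts p q = 0)
    (hflag : ∀ (p : P) (C : Bl), p ∈ pts C →
      ((pts C).filter (fun q => q ≠ p ∧ lamCount pts p q = lam)).card = k - 1)
    (hnonflag : ∀ (p : P) (C : Bl), p ∉ pts C →
      ((pts C).filter (fun q => lamCount pts p q = lam)).card = t)
    (hqs : ∀ C C' : Bl, C ≠ C' →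
      (pts C ∩ pts C').card = 0 ∨ (pts C ∩ pts C').card = y)
    (hx0 : ∃ C C' : Bl, C ≠ C' ∧ (pts C ∩ pts C').card = 0)
    (hy0 : ∃ C C' : Bl, C ≠ C' ∧ (pts C ∩ pts C').card = y)
    (hkv : k < v) (hrb : r < b) (ht : 1 ≤ t) (htk : t < k) (hlam1 : 1 ≤ lam)
    (hy : 0 < y)
    : y ∣ t * lam ∧
      ∀ (C : Bl) (z : P ⊕ Bl),
      ((incGraph pts).dist (Sum.inr C) z = 0 →
        (nbrAt (incGraph pts) (Sum.inr C) z 1).ncard = k) ∧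
      ((incGraph pts).dist (Sum.inr C) z = 1 →
        (nbrAt (incGraph pts) (Sum.inr C) z 0).ncard = 1 ∧
        (nbrAt (incGraph pts) (Sum.inr C) z 2).ncard = r - 1) ∧
      ((incGraph pts).dist (Sum.inr C) z = 2 →
        (nbrAt (incGraph pts) (Sum.inr C) z 1).ncard = y ∧
        (nbrAt (incGraph pts) (Sum.inr C) z 3).ncard = k - y) ∧
      ((incGraph pts).dist (Sum.inr C) z = 3 →
        (nbrAt (incGraph pts) (Sum.inr C) z 2).ncard = t * lam / y ∧
        (nbrAt (incGraph pts) (Sum.inr C) z 4).ncard = r - t * lam / y) ∧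
      ((incGraph pts).dist (Sum.inr C) z = 4 →
        (nbrAt (incGraph pts) (Sum.inr C) z 3).ncard = k ∧
        (nbrAt (incGraph pts) (Sum.inr C) z 5).ncard = 0) := by
  classical
  have hkpos : ∀ C : Bl, (pts C).Nonempty := fun C => by
    rw [← Finset.card_pos, hk]; omega
  -- distance classification
  have DIL : ∀ (C : Bl) (q : P),
      (incGraph pts).dist (Sum.inr C) (Sum.inl q) = if q ∈ pts C then 1 else 3 := by
    intro C q
    split_ifs with h
    · exact dist1 pts h
    · exact dist3 pts hnonflag ht hlam1 h
  have DIR : ∀ (C C' : Bl), (incGraph pts).dist (Sum.inr C) (Sum.inr C') =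
      if C' = C then 0 else if (pts C ∩ pts C').Nonempty then 2 else 4 := by
    intro C C'
    split_ifs with h1 h2
    · subst h1; exact SimpleGraph.dist_self
    · obtain ⟨q, hq⟩ := h2
      rw [Finset.mem_inter] at hq
      exact dist2 pts (fun e => h1 e.symm) hq.1 hq.2
    · exact dist4 pts hnonflag ht hlam1 hkpos (fun e => h1 e.symm)
        (Finset.not_nonempty_iff_eq_empty.mp h2)
  have D1 : ∀ (C : Bl) (q : P),
      ((incGraph pts).dist (Sum.inr C) (Sum.inl q) = 1 ↔ q ∈ pts C) := by
    intro C q; rw [DIL]; split_ifs with h <;> simp [h]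
  have D3 : ∀ (C : Bl) (q : P),
      ((incGraph pts).dist (Sum.inr C) (Sum.inl q) = 3 ↔ q ∉ pts C) := by
    intro C q; rw [DIL]; split_ifs with h <;> simp [h]
  have D0 : ∀ (C C' : Bl),
      ((incGraph pts).dist (Sum.inr C) (Sum.inr C') = 0 ↔ C' = C) := by
    intro C C'; rw [DIR]; split_ifs with h1 h2 <;> simp [h1]
  have D2 : ∀ (C C' : Bl),
      ((incGraph pts).dist (Sum.inr C) (Sum.inr C') = 2 ↔
        C' ≠ C ∧ (pts C ∩ pts C').Nonempty) := by
    intro C C'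
    rw [DIR]
    split_ifs with h1 h2
    · simp [h1]
    · simp [h1, h2]
    · simp [h1, h2]
  have D4 : ∀ (C C' : Bl),
      ((incGraph pts).dist (Sum.inr C) (Sum.inr C') = 4 ↔
        C' ≠ C ∧ ¬(pts C ∩ pts C').Nonempty) := by
    intro C C'
    rw [DIR]
    split_ifs with h1 h2
    · simp [h1]
    · simp [h1, h2]
    · simp [h1, h2]
  constructor
  · -- y ∣ t * lam
    obtain ⟨C0, -, -, -⟩ := hy0
    have hcompl : ((pts C0)ᶜ : Finset P).Nonempty := by
      rw [← Finset.card_pos, Finset.card_compl, hk, hv]; omega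
    obtain ⟨p0, hp0⟩ := hcompl
    rw [Finset.mem_compl] at hp0
    exact ⟨_, (doubleCount pts hlam hnonflag hqs hp0).symm⟩
  intro C z
  refine ⟨?_, ?_, ?_, ?_, ?_⟩
  · -- distance 0
    intro h0
    rcases z with p | C'
    · rw [DIL] at h0; split_ifs at h0 <;> omega
    · rw [(D0 C C').mp h0]
      have e : nbrAt (incGraph pts) (Sum.inr C) (Sum.inr C) 1
          = Sum.inl '' (pts C : Set P) := by
        ext w
        rcases w with q | C''
        · simp [nbrAt, adj_inr_inl pts, D1 C q]
        · simp [nbrAt, not_adj_inr_inr pts]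
      rw [e, ncard_image_inl, hk]
  · -- distance 1
    intro h1
    rcases z with p | C'
    swap
    · rw [DIR] at h1; split_ifs at h1 <;> omega
    have hp : p ∈ pts C := (D1 C p).mp h1
    constructor
    · have e : nbrAt (incGraph pts) (Sum.inr C) (Sum.inl p) 0
          = {Sum.inr C} := by
        ext w
        rcases w with q | C''
        · simp [nbrAt, not_adj_inl_inl pts]
        · simp only [nbrAt, Set.mem_setOf_eq, adj_inl_inr pts, D0 C C'',
            Set.mem_singleton_iff, Sum.inr.injEq]
          constructor
          · rintro ⟨-, rfl⟩; rfl
          · rintro rfl; exact ⟨hp, rfl⟩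
      rw [e, Set.ncard_singleton]
    · have e : nbrAt (incGraph pts) (Sum.inr C) (Sum.inl p) 2
          = Sum.inr '' (((blocksThru pts p).erase C : Finset Bl) : Set Bl) := by
        ext w
        rcases w with q | C''
        · simp [nbrAt, not_adj_inl_inl pts]
        · simp only [nbrAt, Set.mem_setOf_eq, adj_inl_inr pts, D2 C C'',
            Set.mem_image, Finset.coe_erase, Set.mem_diff, Finset.mem_coe,
            Finset.mem_filter, blocksThru, Finset.mem_univ, true_and,
            Set.mem_singleton_iff, Sum.inr.injEq]
          constructor
          · rintro ⟨hpC'', hne, -⟩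
            exact ⟨C'', ⟨hpC'', hne⟩, rfl⟩
          · rintro ⟨D, ⟨hpD, hneD⟩, rfl⟩
            exact ⟨hpD, hneD, ⟨p, Finset.mem_inter.mpr ⟨hp, hpD⟩⟩⟩
      rw [e, ncard_image_inr, Finset.card_erase_of_mem, hr]
      simp [blocksThru, hp]
  · -- distance 2
    intro h2
    rcases z with p | C'
    · rw [DIL] at h2; split_ifs at h2 <;> omega
    obtain ⟨hne, hnem⟩ := (D2 C C').mp h2
    have hyval : (pts C ∩ pts C').card = y := by
      rcases hqs C C' (fun e => hne e.symm) with h | h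
      · exact absurd (Finset.card_eq_zero.mp h) (Finset.nonempty_iff_ne_empty.mp hnem)
      · exact h
    constructor
    · have e : nbrAt (incGraph pts) (Sum.inr C) (Sum.inr C') 1
          = Sum.inl '' ((pts C' ∩ pts C : Finset P) : Set P) := by
        ext w
        rcases w with q | C''
        · simp only [nbrAt, Set.mem_setOf_eq, adj_inr_inl pts, D1 C q,
            Set.mem_image, Finset.coe_inter, Set.mem_inter_iff, Finset.mem_coe,
            Sum.inl.injEq]
          constructor
          · rintro ⟨h1, h2⟩; exact ⟨q, ⟨h1, h2⟩, rfl⟩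
          · rintro ⟨q', ⟨h1, h2⟩, rfl⟩; exact ⟨h1, h2⟩
        · simp [nbrAt, not_adj_inr_inr pts]
      rw [e, ncard_image_inl, Finset.inter_comm, hyval]
    · have e : nbrAt (incGraph pts) (Sum.inr C) (Sum.inr C') 3
          = Sum.inl '' ((pts C' \ pts C : Finset P) : Set P) := by
        ext w
        rcases w with q | C''
        · simp only [nbrAt, Set.mem_setOf_eq, adj_inr_inl pts, D3 C q,
            Set.mem_image, Finset.coe_sdiff, Set.mem_diff, Finset.mem_coe,
            Sum.inl.injEq]
          constructor
          · rintro ⟨h1, h2⟩; exact ⟨q, ⟨h1, h2⟩, rfl⟩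
          · rintro ⟨q', ⟨h1, h2⟩, rfl⟩; exact ⟨h1, h2⟩
        · simp [nbrAt, not_adj_inr_inr pts]
      rw [e, ncard_image_inl]
      have hcs := Finset.card_inter_add_card_sdiff (pts C') (pts C)
      rw [Finset.inter_comm, hyval, hk] at hcs
      omega
  · -- distance 3
    intro h3
    rcases z with p | C'
    swap
    · rw [DIR] at h3; split_ifs at h3 <;> omega
    have hp : p ∉ pts C := (D3 C p).mp h3
    have hym := doubleCount pts hlam hnonflag hqs hp (C := C)
    set M := (blocksThru pts p).filter (fun C'' => (pts C ∩ pts C'').Nonempty) with hM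
    have hm : t * lam / y = M.card := by
      rw [← hym, Nat.mul_div_cancel_left _ hy]
    constructor
    · have e : nbrAt (incGraph pts) (Sum.inr C) (Sum.inl p) 2
          = Sum.inr '' (M : Set Bl) := by
        ext w
        rcases w with q | C''
        · simp [nbrAt, not_adj_inl_inl pts]
        · simp only [nbrAt, Set.mem_setOf_eq, adj_inl_inr pts, D2 C C'',
            Set.mem_image, Finset.mem_coe, hM, Finset.mem_filter, blocksThru,
            Finset.mem_univ, true_and, Sum.inr.injEq]
          constructor
          · rintro ⟨hpC'', -, hne⟩; exact ⟨C'', ⟨hpC'', hne⟩, rfl⟩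
          · rintro ⟨D, ⟨hpD, hneD⟩, rfl⟩
            refine ⟨hpD, ?_, hneD⟩
            rintro rfl
            exact hp hpD
      rw [e, ncard_image_inr, ← hm]
    · have e : nbrAt (incGraph pts) (Sum.inr C) (Sum.inl p) 4
          = Sum.inr '' ((blocksThru pts p \ M : Finset Bl) : Set Bl) := by
        ext w
        rcases w with q | C''
        · simp [nbrAt, not_adj_inl_inl pts]
        · simp only [nbrAt, Set.mem_setOf_eq, adj_inl_inr pts, D4 C C'',
            Set.mem_image, Finset.coe_sdiff, Set.mem_diff, Finset.mem_coe,
            hM, Finset.mem_filter, blocksThru, Finset.mem_univ, true_and,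
            Sum.inr.injEq, not_and]
          constructor
          · rintro ⟨hpC'', -, hne⟩; exact ⟨C'', ⟨hpC'', fun _ => hne⟩, rfl⟩
          · rintro ⟨D, ⟨hpD, hneD⟩, rfl⟩
            refine ⟨hpD, ?_, hneD hpD⟩
            rintro rfl
            exact hp hpD
      rw [e, ncard_image_inr, Finset.card_sdiff_of_subset (Finset.filter_subset _ _), hr, hm]
  · -- distance 4
    intro h4
    rcases z with p | C'
    · rw [DIL] at h4; split_ifs at h4 <;> omega
    obtain ⟨hne, hnem⟩ := (D4 C C').mp h4
    constructor
    · have e : nbrAt (incGraph pts) (Sum.inr C) (Sum.inr C') 3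
          = Sum.inl '' ((pts C' : Finset P) : Set P) := by
        ext w
        rcases w with q | C''
        · simp only [nbrAt, Set.mem_setOf_eq, adj_inr_inl pts, D3 C q,
            Set.mem_image, Finset.mem_coe, Sum.inl.injEq]
          constructor
          · rintro ⟨h1, -⟩; exact ⟨q, h1, rfl⟩
          · rintro ⟨q', h1, rfl⟩
            refine ⟨h1, fun hq' => ?_⟩
            exact hnem ⟨q', Finset.mem_inter.mpr ⟨hq', h1⟩⟩
        · simp [nbrAt, not_adj_inr_inr pts]
      rw [e, ncard_image_inl, hk]
    · have e : nbrAt (incGraph pts) (Sum.inr C) (Sum.inr C') 5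
          = (∅ : Set (P ⊕ Bl)) := by
        ext w
        rcases w with q | C''
        · simp only [nbrAt, Set.mem_setOf_eq, Set.mem_empty_iff_false, iff_false, not_and]
          intro _
          rw [DIL]
          split_ifs <;> omega
        · simp [nbrAt, not_adj_inr_inr pts]
      rw [e, Set.ncard_empty]
end
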